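/- Let k ≥ 0 and n ≥ k+2, and let X be a homogeneous and spatially independent random subcomplex of Δₙ. Then q_k · s_k^{k+1} ≥ r_k^{k+1}. -/
import Mathlib


open MeasureTheory Finset Filter


/-- A (sub)complex of the complete complex on the vertex type `V`:
a family of finite subsets closed under taking subsets and containing `∅`. -/
def SComplex {V : Type*} [DecidableEq V] (Y : Finset (Finset V)) : Prop :=
  ∅ ∈ Y ∧ ∀ σ ∈ Y, ∀ τ ∈ σ.powerset, τ ∈ Y

instance {V : Type*} [DecidableEq V] :
    DecidablePred (fun Y : Finset (Finset V) => SComplex Y) :=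
  fun Y => decidable_of_iff (∅ ∈ Y ∧ ∀ σ ∈ Y, ∀ τ ∈ σ.powerset, τ ∈ Y) Iff.rfl

/-- `scount Y m` = number of simplices of `Y` with `m` vertices (i.e. `(m-1)`-simplices);
`f_k(Y) = scount Y (k+1)` and `f_{-1}(Y) = scount Y 0`. -/
def scount {V : Type*} (Y : Finset (Finset V)) (m : ℕ) : ℕ :=
  (Y.filter (fun σ => σ.card = m)).card

/-- Number of external `i`-simplices of `Y` in the complete complex on `Fin n`:
`i`-simplices `σ ∉ Y` all of whose strict subsets lie in `Y`. -/
def ecount {n : ℕ} (Y : Finset (Finset (Fin n))) (i : ℕ) : ℕ :=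
  (Finset.univ.filter (fun σ : Finset (Fin n) =>
    σ.card = i + 1 ∧ σ ∉ Y ∧ ∀ τ ∈ σ.powerset, τ ≠ σ → τ ∈ Y)).card

/-- The weight `∏_{i=0}^{n-1} p_i^{f_i(Y)} (1-p_i)^{e_i(Y)}` of the
multi-parameter random simplicial complex model. -/
noncomputable def mpWeight {n : ℕ} (p : Fin n → ℝ) (Y : Finset (Finset (Fin n))) : ℝ :=
  ∏ i : Fin n, p i ^ scount Y (i.1 + 1) * (1 - p i) ^ ecount Y i.1

/-- The probability of an event, as a real number. -/
noncomputable def prb {Ω : Type*} [MeasurableSpace Ω] (μ : Measure Ω) (A : Set Ω) : ℝ :=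
  (μ A).toReal

/-- Conditional probability `P(A | B)`, as a real number. -/
noncomputable def condP {Ω : Type*} [MeasurableSpace Ω] (μ : Measure Ω) (A B : Set Ω) : ℝ :=
  prb μ (A ∩ B) / prb μ B

/-- A random subcomplex is homogeneous if its distribution is invariant under
every permutation of the vertices. -/
def Homogeneous {n : ℕ} {Ω : Type*} [MeasurableSpace Ω] (μ : Measure Ω)
    (X : Ω → Finset (Finset (Fin n))) : Prop :=
  ∀ (g : Equiv.Perm (Fin n)) (Y : Finset (Finset (Fin n))),
    prb μ {ω | Finset.image (fun σ => σ.image (⇑g)) (X ω) = Y} = prb μ {ω | X ω = Y}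

/-- Spatial independence of a random subcomplex. -/
def SpatInd {n : ℕ} {Ω : Type*} [MeasurableSpace Ω] (μ : Measure Ω)
    (X : Ω → Finset (Finset (Fin n))) : Prop :=
  ∀ Y₁ Y₂ : Finset (Finset (Fin n)), SComplex Y₁ → SComplex Y₂ →
    prb μ {ω | Y₁ ∪ Y₂ ⊆ X ω} * prb μ {ω | Y₁ ∩ Y₂ ⊆ X ω} =
      prb μ {ω | Y₁ ⊆ X ω} * prb μ {ω | Y₂ ⊆ X ω}

/-- The `k`-dimensional standard simplex `{0, 1, …, k}` in `Fin n`
(for `k = -1` this is the empty simplex). -/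
def stdSimp (n : ℕ) (k : ℤ) : Finset (Fin n) :=
  Finset.univ.filter (fun v => (v : ℤ) ≤ k)

/-- The `k`-dimensional simplex `{1, 2, …, k+1}` in `Fin n`,
sharing `k` vertices with `stdSimp n k`. -/
def stdSimp' (n : ℕ) (k : ℕ) : Finset (Fin n) :=
  Finset.univ.filter (fun v => 1 ≤ (v : ℕ) ∧ (v : ℕ) ≤ k + 1)

/-- The parameter `q_k = P(τ ∈ X)` for a `k`-simplex `τ` (with `q_{-1} = 1`). -/
noncomputable def qpar {n : ℕ} {Ω : Type*} [MeasurableSpace Ω] (μ : Measure Ω)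
    (X : Ω → Finset (Finset (Fin n))) (k : ℤ) : ℝ :=
  if k < 0 then 1 else prb μ {ω | stdSimp n k ∈ X ω}

/-- The parameter `r_k = P(σ ∈ X | τ ∈ X)` for a `(k+1)`-simplex `σ` containing the
`k`-simplex `τ`, if `q_k > 0`, and `0` otherwise (with `r_{-1} = q_0`). -/
noncomputable def rpar {n : ℕ} {Ω : Type*} [MeasurableSpace Ω] (μ : Measure Ω)
    (X : Ω → Finset (Finset (Fin n))) (k : ℤ) : ℝ :=
  if 0 < qpar μ X k then
    condP μ {ω | stdSimp n (k + 1) ∈ X ω} {ω | stdSimp n k ∈ X ω}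
  else 0

/-- The parameter `s_k = P(τ₁ ∪ τ₂ ∈ X | τ₁ ∈ X, τ₂ ∈ X)` for `k`-simplices `τ₁, τ₂`
sharing `k` vertices, if `P(τ₁ ∈ X, τ₂ ∈ X) > 0`, and `0` otherwise. -/
noncomputable def spar {n : ℕ} {Ω : Type*} [MeasurableSpace Ω] (μ : Measure Ω)
    (X : Ω → Finset (Finset (Fin n))) (k : ℕ) : ℝ :=
  if 0 < prb μ ({ω | stdSimp n k ∈ X ω} ∩ {ω | stdSimp' n k ∈ X ω}) then
    condP μ {ω | stdSimp n (k + 1) ∈ X ω}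
      ({ω | stdSimp n k ∈ X ω} ∩ {ω | stdSimp' n k ∈ X ω})
  else 0


section Helpers
set_option linter.unusedSectionVars false

variable {n : ℕ} {Ω : Type*} [MeasurableSpace Ω] (μ : Measure Ω) [IsProbabilityMeasure μ]
  (X : Ω → Finset (Finset (Fin n)))
  (hmeas : ∀ Y, MeasurableSet {ω | X ω = Y})
  (hXc : ∀ ω, SComplex (X ω)) (hhom : Homogeneous μ X) (hsi : SpatInd μ X)

lemma exists_perm_image (σ σ' : Finset (Fin n)) (h : σ.card = σ'.card) :
    ∃ g : Equiv.Perm (Fin n), σ.image g = σ' := by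
  have hc : Fintype.card {x // x ∈ σ} = Fintype.card {x // x ∈ σ'} := by
    simpa [Fintype.card_coe] using h
  let e := Fintype.equivOfCardEq hc
  refine ⟨e.extendSubtype, ?_⟩
  have hsub : σ.image e.extendSubtype ⊆ σ' := by
    intro x hx
    rcases Finset.mem_image.1 hx with ⟨y, hy, rfl⟩
    exact e.extendSubtype_mem y hy
  refine Finset.eq_of_subset_of_card_le hsub ?_
  rw [Finset.card_image_of_injective _ e.extendSubtype.injective]
  omega

include hmeas in
lemma measSet (S : Set (Finset (Finset (Fin n)))) : MeasurableSet {ω | X ω ∈ S} := by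
  have : {ω | X ω ∈ S} = ⋃ (Y : Finset (Finset (Fin n))) (_ : Y ∈ S), {ω | X ω = Y} := by
    ext ω; simp
  rw [this]
  exact MeasurableSet.biUnion S.to_countable (fun Y _ => hmeas Y)

lemma prb_mono {A B : Set Ω} (h : A ⊆ B) : prb μ A ≤ prb μ B :=
  ENNReal.toReal_mono (measure_ne_top μ B) (measure_mono h)

lemma prb_nonneg (A : Set Ω) : 0 ≤ prb μ A := ENNReal.toReal_nonneg

lemma prb_biUnion_eq (F : Ω → Finset (Finset (Fin n)))
    (hF : ∀ Y, MeasurableSet {ω | F ω = Y}) (T : Finset (Finset (Finset (Fin n)))) :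
    prb μ (⋃ Y ∈ T, {ω | F ω = Y}) = ∑ Y ∈ T, prb μ {ω | F ω = Y} := by
  unfold prb
  rw [measure_biUnion_finset ?_ (fun Y _ => hF Y)]
  · exact ENNReal.toReal_sum (fun Y _ => measure_ne_top μ _)
  · intro Y _ Y' _ hne
    refine Set.disjoint_left.2 ?_
    intro ω h1 h2
    exact hne (h1.symm.trans h2)

include hmeas hhom in
lemma prb_mem_perm (g : Equiv.Perm (Fin n)) (σ : Finset (Fin n)) :
    prb μ {ω | σ ∈ X ω} = prb μ {ω | σ.image g ∈ X ω} := by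
  classical
  set F : Ω → Finset (Finset (Fin n)) := fun ω => Finset.image (fun τ => τ.image (⇑g)) (X ω) with hFdef
  have hFmeas : ∀ Y, MeasurableSet {ω | F ω = Y} := by
    intro Y
    have : {ω | F ω = Y} = {ω | X ω ∈ {Z | Finset.image (fun τ => τ.image (⇑g)) Z = Y}} := rfl
    rw [this]; exact measSet X hmeas _
  set T : Finset (Finset (Finset (Fin n))) :=
    Finset.univ.filter (fun Y => σ.image (⇑g) ∈ Y) with hT
  have h1 : {ω | σ ∈ X ω} = ⋃ Y ∈ T, {ω | F ω = Y} := by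
    ext ω
    simp only [Set.mem_setOf_eq, Set.mem_iUnion, hT, Finset.mem_filter, Finset.mem_univ, true_and]
    constructor
    · intro h
      exact ⟨F ω, Finset.mem_image_of_mem _ h, rfl⟩
    · rintro ⟨Y, hY, rfl⟩
      rcases Finset.mem_image.1 hY with ⟨τ, hτ, hτe⟩
      have : τ = σ := Finset.image_injective g.injective hτe
      rwa [← this]
  have h2 : {ω | σ.image (⇑g) ∈ X ω} = ⋃ Y ∈ T, {ω | X ω = Y} := by
    ext ω
    simp only [Set.mem_setOf_eq, Set.mem_iUnion, hT, Finset.mem_filter, Finset.mem_univ, true_and]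
    constructor
    · intro h; exact ⟨X ω, h, rfl⟩
    · rintro ⟨Y, hY, rfl⟩; exact hY
  rw [h1, h2, prb_biUnion_eq μ F hFmeas T, prb_biUnion_eq μ X hmeas T]
  exact Finset.sum_congr rfl (fun Y _ => hhom g Y)

include hmeas hhom in
lemma prb_mem_card (σ σ' : Finset (Fin n)) (h : σ.card = σ'.card) :
    prb μ {ω | σ ∈ X ω} = prb μ {ω | σ' ∈ X ω} := by
  obtain ⟨g, hg⟩ := exists_perm_image σ σ' h
  rw [prb_mem_perm μ X hmeas hhom g σ, hg]

lemma scx_powerset (σ : Finset (Fin n)) : SComplex (σ.powerset) := by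
  refine ⟨Finset.empty_mem_powerset σ, ?_⟩
  intro τ hτ ρ hρ
  exact Finset.mem_powerset.2 ((Finset.mem_powerset.1 hρ).trans (Finset.mem_powerset.1 hτ))

include hXc in
lemma powerset_subset_iff (σ : Finset (Fin n)) (ω : Ω) :
    σ.powerset ⊆ X ω ↔ σ ∈ X ω := by
  constructor
  · intro h; exact h (Finset.mem_powerset_self σ)
  · intro h τ hτ; exact (hXc ω).2 σ h τ hτ

include hXc in
lemma mem_mono {σ τ : Finset (Fin n)} (h : τ ⊆ σ) :
    {ω | σ ∈ X ω} ⊆ {ω | τ ∈ X ω} := by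
  intro ω hω
  exact (hXc ω).2 σ hω τ (Finset.mem_powerset.2 h)

include hXc in
lemma prb_empty_mem : prb μ {ω | (∅ : Finset (Fin n)) ∈ X ω} = 1 := by
  have : {ω | (∅ : Finset (Fin n)) ∈ X ω} = Set.univ := by
    ext ω; simp [(hXc ω).1]
  rw [this]; simp [prb]

include hXc hsi in
lemma si_mem (σ₁ σ₂ : Finset (Fin n)) :
    prb μ ({ω | σ₁ ∈ X ω} ∩ {ω | σ₂ ∈ X ω}) * prb μ {ω | σ₁ ∩ σ₂ ∈ X ω} =
      prb μ {ω | σ₁ ∈ X ω} * prb μ {ω | σ₂ ∈ X ω} := by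
  have h := hsi σ₁.powerset σ₂.powerset (scx_powerset σ₁) (scx_powerset σ₂)
  have e1 : {ω | σ₁.powerset ∪ σ₂.powerset ⊆ X ω} = {ω | σ₁ ∈ X ω} ∩ {ω | σ₂ ∈ X ω} := by
    ext ω
    simp only [Set.mem_setOf_eq, Set.mem_inter_iff, Finset.union_subset_iff,
      powerset_subset_iff X hXc]
  have e2 : σ₁.powerset ∩ σ₂.powerset = (σ₁ ∩ σ₂).powerset := by
    ext τ; simp only [Finset.mem_inter, Finset.mem_powerset, Finset.subset_inter_iff]
  have e3 : {ω | σ₁.powerset ∩ σ₂.powerset ⊆ X ω} = {ω | σ₁ ∩ σ₂ ∈ X ω} := by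
    rw [e2]; ext ω; simp only [Set.mem_setOf_eq, powerset_subset_iff X hXc]
  have e4 : ∀ σ : Finset (Fin n), {ω | σ.powerset ⊆ X ω} = {ω | σ ∈ X ω} := by
    intro σ; ext ω; simp only [Set.mem_setOf_eq, powerset_subset_iff X hXc]
  rw [e1, e3, e4, e4] at h
  exact h

end Helpers

def seg (n m : ℕ) : Finset (Fin n) := Finset.univ.filter (fun v => (v : ℕ) < m)

def iv (n a b : ℕ) : Finset (Fin n) := Finset.univ.filter (fun v => a ≤ (v : ℕ) ∧ (v : ℕ) < b)

lemma card_seg (n m : ℕ) (h : m ≤ n) : (seg n m).card = m := by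
  have hlt : ∀ i ∈ Finset.range m, i < n := fun i hi => lt_of_lt_of_le (Finset.mem_range.1 hi) h
  have : seg n m = (Finset.range m).attachFin hlt := by
    ext v; simp [seg, Finset.mem_attachFin]
  rw [this, Finset.card_attachFin, Finset.card_range]

lemma card_iv (n a b : ℕ) (h : b ≤ n) : (iv n a b).card = b - a := by
  have hlt : ∀ i ∈ Finset.Ico a b, i < n := fun i hi => lt_of_lt_of_le (Finset.mem_Ico.1 hi).2 h
  have : iv n a b = (Finset.Ico a b).attachFin hlt := by
    ext v; simp [iv, Finset.mem_attachFin]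
  rw [this, Finset.card_attachFin, Nat.card_Ico]

lemma seg_inter_iv (n m : ℕ) : seg n (m+1) ∩ iv n 1 (m+2) = iv n 1 (m+1) := by
  ext v; simp only [seg, iv, Finset.mem_inter, Finset.mem_filter, Finset.mem_univ, true_and]; omega

lemma seg_union_iv (n m : ℕ) : seg n (m+1) ∪ iv n 1 (m+2) = seg n (m+2) := by
  ext v; simp only [seg, iv, Finset.mem_union, Finset.mem_filter, Finset.mem_univ, true_and]; omega

lemma seg_zero (n : ℕ) : seg n 0 = ∅ := by
  ext v; simp [seg]

lemma seg_mono (n : ℕ) {m m' : ℕ} (h : m ≤ m') : seg n m ⊆ seg n m' := by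
  intro v; simp only [seg, Finset.mem_filter, Finset.mem_univ, true_and]; omega

lemma stdSimp_eq_seg (n : ℕ) (j : ℕ) : stdSimp n (j : ℤ) = seg n (j+1) := by
  ext v
  simp only [stdSimp, seg, Finset.mem_filter, Finset.mem_univ, true_and]
  omega

lemma stdSimp'_eq_iv (n k : ℕ) : stdSimp' n k = iv n 1 (k+2) := by
  ext v
  simp only [stdSimp', iv, Finset.mem_filter, Finset.mem_univ, true_and]
  omega

section QLem
set_option linter.unusedSectionVars false
variable {n : ℕ} {Ω : Type*} [MeasurableSpace Ω] (μ : Measure Ω) [IsProbabilityMeasure μ]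
  (X : Ω → Finset (Finset (Fin n)))
  (hmeas : ∀ Y, MeasurableSet {ω | X ω = Y})
  (hXc : ∀ ω, SComplex (X ω)) (hhom : Homogeneous μ X) (hsi : SpatInd μ X)

noncomputable def QQ (m : ℕ) : ℝ := prb μ {ω | seg n m ∈ X ω}

include hXc in
lemma QQ_zero : QQ μ X 0 = 1 := by
  unfold QQ; rw [seg_zero]; exact prb_empty_mem μ X hXc

include hXc in
lemma QQ_mono {m m' : ℕ} (h : m ≤ m') : QQ μ X m' ≤ QQ μ X m :=
  prb_mono μ (mem_mono X hXc (seg_mono n h))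

lemma QQ_nonneg (m : ℕ) : 0 ≤ QQ μ X m := prb_nonneg μ _

include hmeas hXc hhom hsi in
lemma QQ_LC (m : ℕ) (h : m + 2 ≤ n) :
    QQ μ X (m+2) * QQ μ X m ≤ QQ μ X (m+1) ^ 2 := by
  have hsim := si_mem μ X hXc hsi (seg n (m+1)) (iv n 1 (m+2))
  rw [seg_inter_iv] at hsim
  have hiv2 : prb μ {ω | iv n 1 (m+2) ∈ X ω} = QQ μ X (m+1) := by
    apply prb_mem_card μ X hmeas hhom
    rw [card_iv n 1 (m+2) h, card_seg n (m+1) (by omega)]; omega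
  have hiv1 : prb μ {ω | iv n 1 (m+1) ∈ X ω} = QQ μ X m := by
    apply prb_mem_card μ X hmeas hhom
    rw [card_iv n 1 (m+1) (by omega), card_seg n m (by omega)]; omega
  rw [hiv2, hiv1] at hsim
  have hle : QQ μ X (m+2) ≤ prb μ ({ω | seg n (m+1) ∈ X ω} ∩ {ω | iv n 1 (m+2) ∈ X ω}) := by
    apply prb_mono
    intro ω hω
    have h1 := mem_mono X hXc (τ := seg n (m+1)) (σ := seg n (m+2)) (seg_mono n (by omega)) hω
    have h2 : iv n 1 (m+2) ⊆ seg n (m+2) := by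
      rw [← seg_union_iv n m]; exact Finset.subset_union_right
    exact ⟨h1, mem_mono X hXc h2 hω⟩
  calc QQ μ X (m+2) * QQ μ X m
      ≤ prb μ ({ω | seg n (m+1) ∈ X ω} ∩ {ω | iv n 1 (m+2) ∈ X ω}) * QQ μ X m :=
        mul_le_mul_of_nonneg_right hle (QQ_nonneg μ X m)
    _ = QQ μ X (m+1) ^ 2 := by rw [hsim]; unfold QQ; ring

include hmeas hXc hhom hsi in
lemma QQ_pow (m : ℕ) (h : m + 1 ≤ n) :
    QQ μ X (m+1) ^ m ≤ QQ μ X m ^ (m+1) := by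
  induction m with
  | zero => simp [QQ_zero μ X hXc]
  | succ m ih =>
    have ih' := ih (by omega)
    by_cases hpos : 0 < QQ μ X (m+1)
    · have hLC := QQ_LC μ X hmeas hXc hhom hsi m h
      have h1 : (QQ μ X (m+2) * QQ μ X m) ^ (m+1) ≤ (QQ μ X (m+1) ^ 2) ^ (m+1) :=
        pow_le_pow_left₀ (mul_nonneg (QQ_nonneg μ X _) (QQ_nonneg μ X _)) hLC (m+1)
      have h2 : QQ μ X (m+2) ^ (m+1) * QQ μ X (m+1) ^ m
          ≤ QQ μ X (m+2) ^ (m+1) * QQ μ X m ^ (m+1) :=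
        mul_le_mul_of_nonneg_left ih' (pow_nonneg (QQ_nonneg μ X _) _)
      have h3 : QQ μ X (m+2) ^ (m+1) * QQ μ X m ^ (m+1)
          ≤ QQ μ X (m+1) ^ (m+2) * QQ μ X (m+1) ^ m := by
        calc QQ μ X (m+2) ^ (m+1) * QQ μ X m ^ (m+1)
            = (QQ μ X (m+2) * QQ μ X m) ^ (m+1) := (mul_pow _ _ _).symm
          _ ≤ (QQ μ X (m+1) ^ 2) ^ (m+1) := h1
          _ = QQ μ X (m+1) ^ (m+2) * QQ μ X (m+1) ^ m := by
              rw [← pow_mul, ← pow_add]; ring_nf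
      have := h2.trans h3
      exact le_of_mul_le_mul_right this (pow_pos hpos m)
    · have h0 : QQ μ X (m+1) = 0 := le_antisymm (not_lt.1 hpos) (QQ_nonneg μ X _)
      have h2 : QQ μ X (m+2) = 0 :=
        le_antisymm (h0 ▸ QQ_mono μ X hXc (by omega)) (QQ_nonneg μ X _)
      rw [h0, h2]
      simp
end QLem

/-- `q_k · s_k^{k+1} ≥ r_k^{k+1}`. -/
theorem qpar_mul_spar_pow_ge_rpar_pow (n k : ℕ) (hn : k + 2 ≤ n)
    {Ω : Type*} [MeasurableSpace Ω] (μ : Measure Ω) [IsProbabilityMeasure μ]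
    (X : Ω → Finset (Finset (Fin n)))
    (hmeas : ∀ Y, MeasurableSet {ω | X ω = Y})
    (hXc : ∀ ω, SComplex (X ω))
    (hhom : Homogeneous μ X) (hsi : SpatInd μ X) :
    rpar μ X (k : ℤ) ^ (k + 1) ≤ qpar μ X (k : ℤ) * spar μ X k ^ (k + 1) := by
  classical
  have hseg1 : stdSimp n (k : ℤ) = seg n (k+1) := stdSimp_eq_seg n k
  have hseg2 : stdSimp n ((k : ℤ) + 1) = seg n (k+2) := by
    have hc : ((k : ℤ) + 1) = ((k+1 : ℕ) : ℤ) := by push_cast; ring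
    rw [hc, stdSimp_eq_seg]
  have hseg2' : stdSimp n (((k+1 : ℕ)) : ℤ) = seg n (k+2) := stdSimp_eq_seg n (k+1)
  have hivC : stdSimp' n k = iv n 1 (k+2) := stdSimp'_eq_iv n k
  have hq_eq : qpar μ X (k : ℤ) = QQ μ X (k+1) := by
    unfold qpar
    rw [if_neg (by omega), hseg1]
    rfl
  have hspar_nonneg : 0 ≤ spar μ X k := by
    unfold spar
    split
    · exact div_nonneg (prb_nonneg μ _) (prb_nonneg μ _)
    · exact le_refl 0
  by_cases hq : 0 < qpar μ X (k : ℤ)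
  · -- main case
    have hb : 0 < QQ μ X (k+1) := hq_eq ▸ hq
    have hc0 : 0 < QQ μ X k := lt_of_lt_of_le hb (QQ_mono μ X hXc (by omega))
    have hAB : {ω | seg n (k+2) ∈ X ω} ⊆ {ω | seg n (k+1) ∈ X ω} :=
      mem_mono X hXc (seg_mono n (by omega))
    have hAC : {ω | seg n (k+2) ∈ X ω} ⊆ {ω | iv n 1 (k+2) ∈ X ω} := by
      apply mem_mono X hXc
      rw [← seg_union_iv n k]
      exact Finset.subset_union_right
    have hr : rpar μ X (k : ℤ) = QQ μ X (k+2) / QQ μ X (k+1) := by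
      unfold rpar condP
      rw [if_pos hq, hseg2, hseg1]
      congr 1
      show prb μ ({ω | seg n (k+2) ∈ X ω} ∩ {ω | seg n (k+1) ∈ X ω}) = _
      unfold QQ
      congr 1
      exact Set.inter_eq_left.2 hAB
    set J : ℝ := prb μ ({ω | seg n (k+1) ∈ X ω} ∩ {ω | iv n 1 (k+2) ∈ X ω}) with hJdef
    have hQ2J : QQ μ X (k+2) ≤ J := by
      apply prb_mono
      intro ω hω
      exact ⟨hAB hω, hAC hω⟩
    by_cases hJ : 0 < J
    · -- J positive
      have hs : spar μ X k = QQ μ X (k+2) / J := by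
        unfold spar condP
        rw [hseg1, hivC, hseg2]
        rw [if_pos hJ]
        congr 1
        show prb μ ({ω | seg n (k+2) ∈ X ω} ∩
          ({ω | seg n (k+1) ∈ X ω} ∩ {ω | iv n 1 (k+2) ∈ X ω})) = _
        unfold QQ
        congr 1
        refine Set.inter_eq_left.2 ?_
        intro ω hω
        exact ⟨hAB hω, hAC hω⟩
      have hsim := si_mem μ X hXc hsi (seg n (k+1)) (iv n 1 (k+2))
      rw [seg_inter_iv] at hsim
      have hiv2 : prb μ {ω | iv n 1 (k+2) ∈ X ω} = QQ μ X (k+1) := by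
        apply prb_mem_card μ X hmeas hhom
        rw [card_iv n 1 (k+2) hn, card_seg n (k+1) (by omega)]
        omega
      have hiv1 : prb μ {ω | iv n 1 (k+1) ∈ X ω} = QQ μ X k := by
        apply prb_mem_card μ X hmeas hhom
        rw [card_iv n 1 (k+1) (by omega), card_seg n k (by omega)]
        omega
      rw [hiv2, hiv1] at hsim
      have hJQ : J * QQ μ X k = QQ μ X (k+1) ^ 2 := by
        rw [hsim]; unfold QQ; ring
      have hQpow : QQ μ X (k+1) ^ k ≤ QQ μ X k ^ (k+1) :=
        QQ_pow μ X hmeas hXc hhom hsi k (by omega)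
      have key : J ^ (k+1) ≤ QQ μ X (k+1) ^ (k+2) := by
        have e1 : J ^ (k+1) * QQ μ X k ^ (k+1) = QQ μ X (k+1) ^ (k+2) * QQ μ X (k+1) ^ k := by
          rw [← mul_pow, hJQ, ← pow_mul, ← pow_add]
          ring_nf
        have e2 : J ^ (k+1) * QQ μ X (k+1) ^ k ≤ J ^ (k+1) * QQ μ X k ^ (k+1) :=
          mul_le_mul_of_nonneg_left hQpow (pow_nonneg (le_of_lt hJ) _)
        rw [e1] at e2
        exact le_of_mul_le_mul_right e2 (pow_pos hb k)
      rw [hr, hs, hq_eq, div_pow, div_pow, ← mul_div_assoc,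
        div_le_div_iff₀ (pow_pos hb _) (pow_pos hJ _)]
      calc QQ μ X (k+2) ^ (k+1) * J ^ (k+1)
          ≤ QQ μ X (k+2) ^ (k+1) * QQ μ X (k+1) ^ (k+2) :=
            mul_le_mul_of_nonneg_left key (pow_nonneg (QQ_nonneg μ X _) _)
        _ = QQ μ X (k+1) * QQ μ X (k+2) ^ (k+1) * QQ μ X (k+1) ^ (k+1) := by ring
    · -- J = 0
      have hJ0 : J = 0 := le_antisymm (not_lt.1 hJ) (prb_nonneg μ _)
      have hQ20 : QQ μ X (k+2) = 0 :=
        le_antisymm (hJ0 ▸ hQ2J) (QQ_nonneg μ X _)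
      have hs0 : spar μ X k = 0 := by
        unfold spar
        rw [hseg1, hivC, if_neg hJ]
      rw [hr, hs0, hQ20, zero_div, zero_pow (by omega), mul_zero]
  · -- q_k not positive
    rw [rpar, if_neg hq, zero_pow (by omega)]
    have h1 : 0 ≤ qpar μ X (k : ℤ) := by
      rw [hq_eq]; exact QQ_nonneg μ X _
    exact mul_nonneg h1 (pow_nonneg hspar_nonneg _)
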